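/- The number of binary strings of even length m ≥ 2 with b_1 = b_m = 1, no two consecutive zeros, and the minimum possible number of ones among such strings, equals m/2. -/

import Mathlib

/-!
Write `m = 2q + 2` and group the inner positions into the blocks `(2k+1, 2k+2)`, `k < q`.
Since no two consecutive symbols are zeros, every block contains a one, so a valid string has at
least `q + 2` ones, with equality exactly when every block is `01` or `10`. A block `10` cannot be
followed by a block `01`, so a minimal string is `1(01)^p(10)^(q-p)1` for one of the `q + 1`
values `p ≤ q`, and these strings are distinct.
-/

/-- The number of ones in a binary string `b : Fin m → Bool`. -/
def ones {m : ℕ} (b : Fin m → Bool) : ℕ :=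
  (Finset.univ.filter fun j => b j = true).card

/-- A valid string: `b_1 = b_m = 1` and no two consecutive zeros. -/
def Valid (m : ℕ) (hm : 2 ≤ m) (b : Fin m → Bool) : Prop :=
  b ⟨0, by omega⟩ = true ∧ b ⟨m - 1, by omega⟩ = true ∧
    ∀ i : ℕ, ∀ h : i + 1 < m, ¬(b ⟨i, by omega⟩ = false ∧ b ⟨i + 1, h⟩ = false)

open Finset

/-- For `m = 2q + 2` and `p ≤ q` this is `1(01)^p(10)^(q-p)1`: ones at the even positions up to
`2p` and at the odd positions beyond. -/
def minimalString (m p : ℕ) : Fin m → Bool := fun i => decide (i.val % 2 = 0 ↔ i.val ≤ 2 * p)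

/-- `b` read at a natural-number index, with the junk value `false` out of range. -/
def bitAt {m : ℕ} (b : Fin m → Bool) (i : ℕ) : Bool := if h : i < m then b ⟨i, h⟩ else false

lemma bitAt_of_lt {m i : ℕ} (b : Fin m → Bool) (h : i < m) : bitAt b i = b ⟨i, h⟩ := dif_pos h

lemma eq_of_bitAt_eq {m : ℕ} {b b' : Fin m → Bool} (h : ∀ i < m, bitAt b i = bitAt b' i) :
    b = b' := by
  funext i
  rw [← bitAt_of_lt b i.isLt, ← bitAt_of_lt b' i.isLt, h i i.isLt]

lemma bitAt_minimalString {m p i : ℕ} (h : i < m) :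
    bitAt (minimalString m p) i = decide (i % 2 = 0 ↔ i ≤ 2 * p) :=
  bitAt_of_lt _ h

lemma ones_eq_sum_bitAt {m : ℕ} (b : Fin m → Bool) :
    ones b = ∑ i ∈ range m, (bitAt b i).toNat := by
  rw [← Fin.sum_univ_eq_sum_range, ones, card_filter]
  refine sum_congr rfl fun i _ => ?_
  rw [bitAt_of_lt b i.isLt]
  cases b i <;> rfl

lemma valid_iff_bitAt {m : ℕ} (hm : 2 ≤ m) (b : Fin m → Bool) :
    Valid m hm b ↔ bitAt b 0 = true ∧ bitAt b (m - 1) = true ∧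
      ∀ i, i + 1 < m → bitAt b i = true ∨ bitAt b (i + 1) = true := by
  simp only [Valid, bitAt_of_lt b (show 0 < m by omega), bitAt_of_lt b (show m - 1 < m by omega)]
  refine and_congr_right' (and_congr_right' (forall_congr' fun i =>
    ⟨fun h hi => ?_, fun h hi => ?_⟩))
  · rw [bitAt_of_lt b (by omega), bitAt_of_lt b hi]
    simpa [or_iff_not_and_not] using h hi
  · rw [bitAt_of_lt b (by omega), bitAt_of_lt b hi] at h
    simpa [or_iff_not_and_not] using h hi

lemma sum_range_two_mul_add_two {M : Type*} [AddCommMonoid M] (f : ℕ → M) (q : ℕ) :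
    ∑ i ∈ range (2 * q + 2), f i =
      f 0 + ∑ k ∈ range q, (f (2 * k + 1) + f (2 * k + 2)) + f (2 * q + 1) := by
  induction q with
  | zero => simp [sum_range_succ]
  | succ q ih =>
    rw [show 2 * (q + 1) + 2 = 2 * q + 2 + 1 + 1 by ring, sum_range_succ, sum_range_succ, ih,
      sum_range_succ]
    ring_nf
    abel

lemma Bool.toNat_add_toNat_eq_one {x y : Bool} : x.toNat + y.toNat = 1 ↔ y = !x := by
  cases x <;> cases y <;> decide

lemma Bool.one_le_toNat_add_toNat {x y : Bool} (h : x = true ∨ y = true) :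
    1 ≤ x.toNat + y.toNat := by
  cases x <;> cases y <;> simp_all

section Blocks

variable {c : ℕ → Bool} {q : ℕ}

lemma true_at_odd_of_le (hadj : ∀ k < q, c (2 * k + 2) = true ∨ c (2 * k + 3) = true)
    (hblock : ∀ k < q, c (2 * k + 2) = !c (2 * k + 1)) {k j : ℕ} (hk : c (2 * k + 1) = true)
    (hkj : k ≤ j) (hj : j ≤ q) : c (2 * j + 1) = true := by
  induction j, hkj using Nat.le_induction with
  | base => exact hk
  | succ j _ ih =>
    have hzero : c (2 * j + 2) = false := by rw [hblock j (by omega), ih (by omega)]; rfl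
    rw [show 2 * (j + 1) + 1 = 2 * j + 3 by ring]
    simpa [hzero] using hadj j (by omega)

lemma exists_eq_alternating_of_blocks (h0 : c 0 = true) (hlast : c (2 * q + 1) = true)
    (hadj : ∀ k < q, c (2 * k + 2) = true ∨ c (2 * k + 3) = true)
    (hblock : ∀ k < q, c (2 * k + 2) = !c (2 * k + 1)) :
    ∃ p ≤ q, ∀ i < 2 * q + 2, c i = decide (i % 2 = 0 ↔ i ≤ 2 * p) := by
  classical
  have hex : ∃ k, c (2 * k + 1) = true := ⟨q, hlast⟩
  set p := Nat.find hex
  have hodd : ∀ k ≤ q, c (2 * k + 1) = decide (p ≤ k) := by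
    intro k hk
    by_cases hpk : p ≤ k
    · simpa [hpk] using true_at_odd_of_le hadj hblock (Nat.find_spec hex) hpk hk
    · simpa [hpk] using Nat.find_min hex (not_le.1 hpk)
  have heven : ∀ k < q, c (2 * k + 2) = decide (k < p) := by
    intro k hk
    rw [hblock k hk, hodd k hk.le, ← decide_not]
    exact decide_eq_decide.2 not_le
  refine ⟨p, Nat.find_min' hex hlast, fun i hi => ?_⟩
  obtain ⟨k, rfl | rfl⟩ := Nat.even_or_odd' i
  · rcases k with _ | k
    · simpa using h0
    · rw [show 2 * (k + 1) = 2 * k + 2 by ring, heven k (by omega)]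
      exact decide_eq_decide.2 (by omega)
  · rw [hodd k (by omega)]
    exact decide_eq_decide.2 (by omega)

end Blocks

section Valid

variable {q : ℕ} {hm : 2 ≤ 2 * q + 2} {b : Fin (2 * q + 2) → Bool}

lemma Valid.ones_eq (hb : Valid (2 * q + 2) hm b) :
    ones b = 2 + ∑ k ∈ range q, ((bitAt b (2 * k + 1)).toNat + (bitAt b (2 * k + 2)).toNat) := by
  obtain ⟨h0, hlast, -⟩ := (valid_iff_bitAt hm b).1 hb
  rw [show 2 * q + 2 - 1 = 2 * q + 1 by omega] at hlast
  rw [ones_eq_sum_bitAt, sum_range_two_mul_add_two, h0, hlast, Bool.toNat_true]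
  ring

lemma Valid.one_le_block (hb : Valid (2 * q + 2) hm b) {k : ℕ} (hk : k < q) :
    1 ≤ (bitAt b (2 * k + 1)).toNat + (bitAt b (2 * k + 2)).toNat :=
  Bool.one_le_toNat_add_toNat (((valid_iff_bitAt hm b).1 hb).2.2 _ (by omega))

lemma Valid.add_two_le_ones (hb : Valid (2 * q + 2) hm b) : q + 2 ≤ ones b := by
  have := sum_le_sum fun k hk => hb.one_le_block (mem_range.1 hk)
  simp only [sum_const, card_range, smul_eq_mul, mul_one] at this
  rw [hb.ones_eq]
  omega

lemma Valid.exists_eq_minimalString (hb : Valid (2 * q + 2) hm b) (hones : ones b = q + 2) :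
    ∃ p ≤ q, b = minimalString (2 * q + 2) p := by
  obtain ⟨h0, hlast, hadj⟩ := (valid_iff_bitAt hm b).1 hb
  have hblocks : ∀ k ∈ range q, 1 = (bitAt b (2 * k + 1)).toNat + (bitAt b (2 * k + 2)).toNat := by
    refine (sum_eq_sum_iff_of_le fun k hk => hb.one_le_block (mem_range.1 hk)).1 ?_
    rw [hb.ones_eq] at hones
    simp only [sum_const, card_range, smul_eq_mul, mul_one]
    omega
  obtain ⟨p, hpq, hp⟩ := exists_eq_alternating_of_blocks h0 (by simpa using hlast)
    (fun k hk => hadj _ (by omega))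
    (fun k hk => Bool.toNat_add_toNat_eq_one.1 (hblocks k (mem_range.2 hk)).symm)
  exact ⟨p, hpq, eq_of_bitAt_eq fun i hi => by rw [hp i hi, bitAt_minimalString hi]⟩

end Valid

lemma valid_minimalString {q p : ℕ} (hm : 2 ≤ 2 * q + 2) (hp : p ≤ q) :
    Valid (2 * q + 2) hm (minimalString (2 * q + 2) p) := by
  refine ⟨by simp [minimalString], by simp only [minimalString, decide_eq_true_iff]; omega,
    fun i hi => ?_⟩
  simp only [minimalString, decide_eq_false_iff_not]
  omega

lemma ones_minimalString {q p : ℕ} (hp : p ≤ q) : ones (minimalString (2 * q + 2) p) = q + 2 := by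
  have hblocks : ∀ k ∈ range q, (bitAt (minimalString (2 * q + 2) p) (2 * k + 1)).toNat +
      (bitAt (minimalString (2 * q + 2) p) (2 * k + 2)).toNat = 1 := by
    intro k hk
    have hk : k < q := mem_range.1 hk
    rw [Bool.toNat_add_toNat_eq_one, bitAt_minimalString (by omega), bitAt_minimalString (by omega),
      ← decide_not]
    exact decide_eq_decide.2 (by omega)
  rw [(valid_minimalString (by omega) hp).ones_eq, sum_congr rfl hblocks]
  simp only [sum_const, card_range, smul_eq_mul, mul_one]
  omega

lemma minimalString_injOn (q : ℕ) : Set.InjOn (minimalString (2 * q + 2)) (Set.Iio (q + 1)) := by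
  intro p hp p' hp' h
  have := congrArg (bitAt · (2 * min p p' + 1)) h
  simp only [Set.mem_Iio] at hp hp'
  rw [bitAt_minimalString (by omega), bitAt_minimalString (by omega), decide_eq_decide] at this
  omega

/-- The number of binary strings of even length `m ≥ 2` with `b_1 = b_m = 1`,
no two consecutive zeros, and the minimum possible number of ones among such
strings, equals `m / 2`. -/
theorem stmt_10 (m : ℕ) (hm : 2 ≤ m) (he : m % 2 = 0) :
    Nat.card {b : Fin m → Bool // Valid m hm b ∧
      ∀ b' : Fin m → Bool, Valid m hm b' → ones b ≤ ones b'} = m / 2 := by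
  obtain ⟨q, rfl⟩ : ∃ q, m = 2 * q + 2 := ⟨m / 2 - 1, by omega⟩
  have hmin : {b | Valid _ hm b ∧ ∀ b', Valid _ hm b' → ones b ≤ ones b'} =
      minimalString (2 * q + 2) '' Set.Iio (q + 1) := by
    ext b
    constructor
    · rintro ⟨hb, hbmin⟩
      have hones : ones b = q + 2 := le_antisymm
        (ones_minimalString (Nat.zero_le q) ▸ hbmin _ (valid_minimalString hm (Nat.zero_le q)))
        hb.add_two_le_ones
      obtain ⟨p, hpq, rfl⟩ := hb.exists_eq_minimalString hones
      exact ⟨p, Nat.lt_succ_of_le hpq, rfl⟩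
    · rintro ⟨p, hp, rfl⟩
      have hpq : p ≤ q := Nat.le_of_lt_succ hp
      exact ⟨valid_minimalString hm hpq, fun b' hb' => ones_minimalString hpq ▸ hb'.add_two_le_ones⟩
  rw [← Set.coe_ofPred, hmin, Nat.card_image_of_injOn (minimalString_injOn q), Nat.card_coe_set_eq,
    Set.ncard_Iio_nat]
  omega
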